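/- arXiv:1703.10237 — 4 statements merged into one kernel-verified Lean document; each statement's English description precedes it below -/
import Mathlib

section
/- Let k be a field of characteristic p ≥ 3, let r ≥ 1, let f(T) = Σ_{i=1}^t a_i T^{p^i} ∈ k[T] be a nonzero inseparable p-polynomial, and let η ∈ k with η ≠ 0. Let R be the quotient of k[u_0, …, u_r, v] by the ideal generated by u_0^p, …, u_{r−1}^p, u_r^p + v², and f(u_r) + η·u_0, and let S be the quotient of k[u_0, …, u_{r−1}, v] by the ideal generated by u_0^p, …, u_{r−2}^p, u_{r−1}^p + v², and (f(u_{r−1}))^p. Then there is a k-algebra isomorphism φ: R → S determined by φ(v) = v, φ(u_i) = u_{i−1} for 1 ≤ i ≤ r, and φ(u_0) = −η^{−1}·f(u_{r−1}). -/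
open MvPolynomial

/-!
Solving the last relation for `u_0 = -η⁻¹ f(u_r)` eliminates `u_0`; after renaming
`u_i ↦ u_{i-1}` the only trace it leaves is the relation `u_0^p = 0`, which becomes
`f(u_{r-1})^p = 0`. Conversely, `f(u_r) ≡ -η u_0` in `R`, so `f(u_r)^p ≡ (-η)^p u_0^p = 0`.
-/

theorem Ideal.pow_mem_of_add_mul_mem {A : Type*} [CommRing A] {I : Ideal A} {x y c : A}
    {n : ℕ} (h : x + c * y ∈ I) (hy : y ^ n ∈ I) : x ^ n ∈ I := by
  have hx : x = (x + c * y) + (-c) * y := by ring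
  rw [← Ideal.Quotient.eq_zero_iff_mem, map_pow] at hy ⊢
  rw [← Ideal.Quotient.eq_zero_iff_mem] at h
  rw [hx, map_add, h, zero_add, map_mul, mul_pow, hy, mul_zero]

section QuotientEquiv

variable {R A B : Type*} [CommSemiring R] [CommRing A] [CommRing B] [Algebra R A] [Algebra R B]
  {I : Ideal A} {J : Ideal B}

def Ideal.quotientEquivAlgOfInverseMod (f : A →ₐ[R] B) (g : B →ₐ[R] A)
    (hf : I ≤ J.comap f) (hg : J ≤ I.comap g)
    (hgf : ∀ x, g (f x) - x ∈ I) (hfg : ∀ y, f (g y) - y ∈ J) : (A ⧸ I) ≃ₐ[R] (B ⧸ J) :=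
  AlgEquiv.ofAlgHom (Ideal.quotientMapₐ J f hf) (Ideal.quotientMapₐ I g hg)
    (Ideal.Quotient.algHom_ext R <| AlgHom.ext fun y => by
      simpa [Ideal.Quotient.eq] using hfg y)
    (Ideal.Quotient.algHom_ext R <| AlgHom.ext fun x => by
      simpa [Ideal.Quotient.eq] using hgf x)

@[simp]
theorem Ideal.quotientEquivAlgOfInverseMod_mk (f : A →ₐ[R] B) (g : B →ₐ[R] A)
    (hf : I ≤ J.comap f) (hg : J ≤ I.comap g) (hgf : ∀ x, g (f x) - x ∈ I)
    (hfg : ∀ y, f (g y) - y ∈ J) (x : A) :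
    Ideal.quotientEquivAlgOfInverseMod f g hf hg hgf hfg (Ideal.Quotient.mk I x) =
      Ideal.Quotient.mk J (f x) :=
  rfl

end QuotientEquiv

section Elimination

variable {k : Type*} [Field k] (p r : ℕ) (F : Polynomial k) (η : k)

/-- The ideal of relations of `R = kM_{r+1;f,η}` in `k[u_0, …, u_r, v]`, with `v = X (r+1)`. -/
noncomputable def idealR : Ideal (MvPolynomial (Fin (r + 2)) k) :=
  Ideal.span
    ({q | ∃ ℓ : ℕ, ∃ h : ℓ < r, q = X (⟨ℓ, Nat.lt_add_right 2 h⟩ : Fin (r + 2)) ^ p} ∪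
      {X (Fin.last r).castSucc ^ p + X (Fin.last (r + 1)) ^ 2,
        Polynomial.aeval (X (Fin.last r).castSucc) F + C η * X 0})

/-- The ideal of relations of `S = kM_{r;f^p}` in `k[u_0, …, u_{r-1}, v]`, with `v = X r`. -/
noncomputable def idealS : Ideal (MvPolynomial (Fin (r + 1)) k) :=
  Ideal.span
    ({q | ∃ ℓ : ℕ, ∃ h : ℓ + 2 ≤ r,
        q = X (⟨ℓ, Nat.lt_succ_of_le ((Nat.le_add_right ℓ 2).trans h)⟩ : Fin (r + 1)) ^ p} ∪
      {X (⟨r - 1, Nat.sub_lt_succ r 1⟩ : Fin (r + 1)) ^ p + X (Fin.last r) ^ 2,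
        Polynomial.aeval (X (⟨r - 1, Nat.sub_lt_succ r 1⟩ : Fin (r + 1))) F ^ p})

noncomputable def substU0 : MvPolynomial (Fin (r + 2)) k →ₐ[k] MvPolynomial (Fin (r + 1)) k :=
  aeval <| Fin.cons
    (C (-η⁻¹) * Polynomial.aeval (X (⟨r - 1, Nat.sub_lt_succ r 1⟩ : Fin (r + 1))) F) X

@[simp]
theorem substU0_X_zero :
    substU0 r F η (X 0) =
      C (-η⁻¹) * Polynomial.aeval (X (⟨r - 1, Nat.sub_lt_succ r 1⟩ : Fin (r + 1))) F := by
  simp [substU0]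

@[simp]
theorem substU0_X_succ (j : Fin (r + 1)) : substU0 r F η (X j.succ) = X j := by
  simp [substU0]

theorem substU0_comp_rename_succ :
    (substU0 r F η).comp (rename Fin.succ) = AlgHom.id k (MvPolynomial (Fin (r + 1)) k) :=
  algHom_ext fun j => by simp

variable {r}

theorem Fin.succ_mk_sub_one (hr : 1 ≤ r) :
    (Fin.succ ⟨r - 1, Nat.sub_lt_succ r 1⟩ : Fin (r + 2)) = (Fin.last r).castSucc :=
  Fin.ext (by simp; omega)

theorem rename_succ_aeval_X_pred (hr : 1 ≤ r) :
    rename Fin.succ (Polynomial.aeval (X (⟨r - 1, Nat.sub_lt_succ r 1⟩ : Fin (r + 1))) F) =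
      Polynomial.aeval (X (Fin.last r).castSucc : MvPolynomial _ k) F := by
  rw [← Polynomial.aeval_algHom_apply, rename_X, Fin.succ_mk_sub_one hr]

theorem substU0_aeval_X (hr : 1 ≤ r) :
    substU0 r F η (Polynomial.aeval (X (Fin.last r).castSucc) F) =
      Polynomial.aeval (X (⟨r - 1, Nat.sub_lt_succ r 1⟩ : Fin (r + 1))) F := by
  rw [← Polynomial.aeval_algHom_apply, ← Fin.succ_mk_sub_one hr, substU0_X_succ]

theorem idealR_le_comap_substU0 (hr : 1 ≤ r) (hη : η ≠ 0) :
    idealR p r F η ≤ (idealS p r F).comap (substU0 r F η) := by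
  rw [idealR, Ideal.span_le]
  rintro q (⟨ℓ, hℓ, rfl⟩ | rfl | rfl) <;> rw [SetLike.mem_coe, Ideal.mem_comap]
  · cases ℓ with
    | zero =>
      rw [map_pow, Fin.mk_zero', substU0_X_zero, mul_pow]
      exact Ideal.mul_mem_left _ _ (Ideal.subset_span (Or.inr (Or.inr rfl)))
    | succ m =>
      rw [map_pow, ← Fin.succ_mk _ m (by omega), substU0_X_succ]
      exact Ideal.subset_span (Or.inl ⟨m, by omega, rfl⟩)
  · rw [map_add, map_pow, map_pow, ← Fin.succ_mk_sub_one hr, ← Fin.succ_last, substU0_X_succ,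
      substU0_X_succ]
    exact Ideal.subset_span (Or.inr (Or.inl rfl))
  · have cancel (g : MvPolynomial (Fin (r + 1)) k) : g + C η * (C (-η⁻¹) * g) = 0 := by
      rw [← mul_assoc, ← C_mul, mul_neg, mul_inv_cancel₀ hη, C_neg, C_1]
      ring
    rw [map_add, substU0_aeval_X F η hr, map_mul, algHom_C, substU0_X_zero, algebraMap_eq, cancel]
    exact zero_mem _

theorem X_zero_pow_mem_idealR (hr : 1 ≤ r) : X 0 ^ p ∈ idealR p r F η :=
  Ideal.subset_span (Or.inl ⟨0, hr, rfl⟩)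

theorem aeval_X_add_mem_idealR :
    Polynomial.aeval (X (Fin.last r).castSucc : MvPolynomial _ k) F + C η * X 0 ∈
      idealR p r F η :=
  Ideal.subset_span (Or.inr (Or.inr rfl))

theorem idealS_le_comap_rename_succ (hr : 1 ≤ r) :
    idealS p r F ≤ (idealR p r F η).comap (rename Fin.succ) := by
  rw [idealS, Ideal.span_le]
  rintro q (⟨ℓ, hℓ, rfl⟩ | rfl | rfl) <;> rw [SetLike.mem_coe, Ideal.mem_comap]
  · rw [map_pow, rename_X]
    exact Ideal.subset_span (Or.inl ⟨ℓ + 1, by omega, rfl⟩)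
  · rw [map_add, map_pow, map_pow, rename_X, rename_X, Fin.succ_mk_sub_one hr, Fin.succ_last]
    exact Ideal.subset_span (Or.inr (Or.inl rfl))
  · rw [map_pow, rename_succ_aeval_X_pred F hr]
    exact Ideal.pow_mem_of_add_mul_mem (aeval_X_add_mem_idealR p F η)
      (X_zero_pow_mem_idealR p F η hr)

theorem rename_succ_substU0_sub_mem (hr : 1 ≤ r) (hη : η ≠ 0)
    (x : MvPolynomial (Fin (r + 2)) k) :
    rename Fin.succ (substU0 r F η x) - x ∈ idealR p r F η := by
  suffices (Ideal.Quotient.mkₐ k _).comp ((rename Fin.succ).comp (substU0 r F η)) =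
      Ideal.Quotient.mkₐ k (idealR p r F η) by
    simpa [Ideal.Quotient.eq] using DFunLike.congr_fun this x
  refine algHom_ext fun j => ?_
  cases j using Fin.cases with
  | zero =>
    have : C (-η⁻¹) * Polynomial.aeval (X (Fin.last r).castSucc) F - X 0 =
        C (-η⁻¹) * (Polynomial.aeval (X (Fin.last r).castSucc) F + C η * X 0) := by
      rw [mul_add, ← mul_assoc, ← C_mul, neg_mul, inv_mul_cancel₀ hη]
      simp only [C_neg, C_1]
      ring
    rw [AlgHom.comp_apply, AlgHom.comp_apply, substU0_X_zero, map_mul, rename_C,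
      rename_succ_aeval_X_pred F hr, Ideal.Quotient.mkₐ_eq_mk, Ideal.Quotient.eq, this]
    exact Ideal.mul_mem_left _ _ (aeval_X_add_mem_idealR p F η)
  | succ j => simp

noncomputable def equivRS (hr : 1 ≤ r) (hη : η ≠ 0) :
    (MvPolynomial (Fin (r + 2)) k ⧸ idealR p r F η) ≃ₐ[k]
      (MvPolynomial (Fin (r + 1)) k ⧸ idealS p r F) :=
  Ideal.quotientEquivAlgOfInverseMod (substU0 r F η) (rename Fin.succ)
    (idealR_le_comap_substU0 p F η hr hη) (idealS_le_comap_rename_succ p F η hr)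
    (rename_succ_substU0_sub_mem p F η hr hη)
    (fun y => by
      rw [← AlgHom.comp_apply, substU0_comp_rename_succ, AlgHom.id_apply, sub_self]
      exact zero_mem _)

@[simp]
theorem equivRS_mk (hr : 1 ≤ r) (hη : η ≠ 0) (x : MvPolynomial (Fin (r + 2)) k) :
    equivRS p F η hr hη (Ideal.Quotient.mk _ x) = Ideal.Quotient.mk _ (substU0 r F η x) :=
  rfl

end Elimination

noncomputable def pPolynomial {k : Type*} [Field k] (p t : ℕ) (a : ℕ → k) : Polynomial k :=
  ∑ i ∈ Finset.Icc 1 t, Polynomial.C (a i) * Polynomial.X ^ p ^ i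

theorem aeval_X_pPolynomial {k σ : Type*} [Field k] (p t : ℕ) (a : ℕ → k) (j : σ) :
    Polynomial.aeval (X j) (pPolynomial p t a) = ∑ i ∈ Finset.Icc 1 t, C (a i) * X j ^ p ^ i := by
  simp [pPolynomial, algebraMap_eq]

/-- For `η ≠ 0` there is a `k`-algebra isomorphism `kM_{r+1;f,η} ≅ kM_{r;f^p}`, given by
`v ↦ v`, `u_i ↦ u_{i−1}` for `1 ≤ i ≤ r`, and `u_0 ↦ −η⁻¹·f(u_{r−1})`.
Here `R = k[u_0, …, u_r, v]/(u_0^p, …, u_{r−1}^p, u_r^p + v², f(u_r) + η·u_0)` (variables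
`X ⟨0⟩, …, X ⟨r⟩, X ⟨r+1⟩ = v` of `MvPolynomial (Fin (r+2)) k`) and
`S = k[u_0, …, u_{r−1}, v]/(u_0^p, …, u_{r−2}^p, u_{r−1}^p + v², f(u_{r−1})^p)` (variables
`X ⟨0⟩, …, X ⟨r−1⟩, X ⟨r⟩ = v` of `MvPolynomial (Fin (r+1)) k`). -/
theorem statement5 {k : Type} [Field k] (p : ℕ) (r t : ℕ) (hr : 1 ≤ r)
    (a : ℕ → k) (η : k) (hη : η ≠ 0)
    (IR : Ideal (MvPolynomial (Fin (r + 2)) k))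
    (hIR : IR = Ideal.span
      ({q | ∃ ℓ : ℕ, ∃ _ : ℓ < r, q = X (⟨ℓ, by omega⟩ : Fin (r + 2)) ^ p} ∪
        {X (⟨r, by omega⟩ : Fin (r + 2)) ^ p + X (⟨r + 1, by omega⟩ : Fin (r + 2)) ^ 2,
          (∑ i ∈ Finset.Icc 1 t, C (a i) * X (⟨r, by omega⟩ : Fin (r + 2)) ^ p ^ i) +
            C η * X (⟨0, by omega⟩ : Fin (r + 2))}))
    (IS : Ideal (MvPolynomial (Fin (r + 1)) k))
    (hIS : IS = Ideal.span
      ({q | ∃ ℓ : ℕ, ∃ _ : ℓ + 2 ≤ r, q = X (⟨ℓ, by omega⟩ : Fin (r + 1)) ^ p} ∪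
        {X (⟨r - 1, by omega⟩ : Fin (r + 1)) ^ p + X (⟨r, by omega⟩ : Fin (r + 1)) ^ 2,
          (∑ i ∈ Finset.Icc 1 t, C (a i) * X (⟨r - 1, by omega⟩ : Fin (r + 1)) ^ p ^ i) ^ p})) :
    ∃ φ : (MvPolynomial (Fin (r + 2)) k ⧸ IR) ≃ₐ[k] (MvPolynomial (Fin (r + 1)) k ⧸ IS),
      φ (Ideal.Quotient.mk IR (X (⟨r + 1, by omega⟩ : Fin (r + 2)))) =
        Ideal.Quotient.mk IS (X (⟨r, by omega⟩ : Fin (r + 1))) ∧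
      (∀ i : ℕ, ∀ _ : 1 ≤ i, ∀ _ : i ≤ r,
        φ (Ideal.Quotient.mk IR (X (⟨i, by omega⟩ : Fin (r + 2)))) =
          Ideal.Quotient.mk IS (X (⟨i - 1, by omega⟩ : Fin (r + 1)))) ∧
      φ (Ideal.Quotient.mk IR (X (⟨0, by omega⟩ : Fin (r + 2)))) =
        Ideal.Quotient.mk IS (C (-η⁻¹) *
          (∑ i ∈ Finset.Icc 1 t, C (a i) * X (⟨r - 1, by omega⟩ : Fin (r + 1)) ^ p ^ i)) := by
  obtain rfl : IR = idealR p r (pPolynomial p t a) η := by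
    rw [hIR, idealR, aeval_X_pPolynomial]
    rfl
  obtain rfl : IS = idealS p r (pPolynomial p t a) := by
    rw [hIS, idealS, aeval_X_pPolynomial]
    rfl
  refine ⟨equivRS p _ η hr hη, ?_, fun i hi _ => ?_, ?_⟩
  · rw [equivRS_mk, ← Fin.succ_mk _ r (by omega), substU0_X_succ]
  · obtain ⟨m, rfl⟩ : ∃ m, i = m + 1 := ⟨i - 1, by omega⟩
    rw [equivRS_mk, ← Fin.succ_mk _ m (by omega), substU0_X_succ]
    rfl
  · rw [equivRS_mk, Fin.mk_zero', substU0_X_zero, aeval_X_pPolynomial]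
end

section
/- Let p be an odd prime, let A be a commutative ring in which p·1 = 0, let s ≥ 2, and let R = A[u, v]/(u^p + v², u^{p^s}). Given μ, c_0, …, c_{s−1} ∈ A, set u' = Σ_{i=0}^{s−1} c_i u^{p^i} and v' = μ·v in R. Then u'^p + v'² = 0 in R if and only if μ² = c_0^p and c_i^p = 0 for all 1 ≤ i ≤ s−2. -/
/-!
Modulo `u^p + v²` the element `v'² = μ² v²` equals `-μ² u^p`, and Frobenius gives
`u'^p = Σ c_i^p u^{p^{i+1}}`, so the relation holds iff the one-variable polynomial
`P = Σ_{i<s} c_i^p X^{p^{i+1}} - μ² X^p` vanishes at `u` in `R`. The subring of `R` generated by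
`u` is `A[X]/(X^{p^s})`: `R` is obtained from it by adjoining a root of the monic polynomial
`Y² + u^p`, which makes it a free module over it. So the relation holds iff `X^{p^s} ∣ P`, and
reading off the coefficients of `X^p` and `X^{p^{i+1}}` for `1 ≤ i ≤ s - 2` gives the
conditions.
-/

open MvPolynomial

theorem AdjoinRoot.algebraMap_injective_of_monic {R : Type*} [CommRing R] {g : Polynomial R}
    (hg : g.Monic) (hdeg : g.natDegree ≠ 0) :
    Function.Injective (algebraMap R (AdjoinRoot g)) := by
  refine (injective_iff_map_eq_zero _).2 fun z hz => by_contra fun hz0 => ?_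
  have : Nontrivial R := ⟨⟨z, 0, hz0⟩⟩
  refine AdjoinRoot.mk_ne_zero_of_degree_lt hg (Polynomial.C_ne_zero.2 hz0) ?_ hz
  rw [Polynomial.degree_eq_natDegree hg.ne_zero]
  exact Polynomial.degree_C_le.trans_lt (by exact_mod_cast Nat.pos_of_ne_zero hdeg)

theorem sum_mul_pow_pow_of_prime {R : Type*} [CommRing R] {p : ℕ} (hp : p.Prime)
    (hpR : (p : R) = 0) (S : Finset ℕ) (a : ℕ → R) (x : R) :
    (∑ i ∈ S, a i * x ^ p ^ i) ^ p = ∑ i ∈ S, a i ^ p * x ^ p ^ (i + 1) := by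
  rcases subsingleton_or_nontrivial R with hR | hR
  · exact Subsingleton.elim _ _
  have : Fact p.Prime := ⟨hp⟩
  have : CharP R p := (CharP.charP_iff_prime_eq_zero hp).2 hpR
  rw [sum_pow_char]
  refine Finset.sum_congr rfl fun i _ => ?_
  rw [mul_pow, ← pow_mul, ← pow_succ]

theorem Polynomial.coeff_sum_C_mul_X_pow_of_injective {R ι : Type*} [Semiring R] [DecidableEq ι]
    {e : ι → ℕ} (he : Function.Injective e) (S : Finset ι) (a : ι → R) (k : ι) :
    (∑ i ∈ S, C (a i) * X ^ e i).coeff (e k) = if k ∈ S then a k else 0 := by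
  simp only [Polynomial.finsetSum_coeff, Polynomial.coeff_C_mul_X_pow, he.eq_iff,
    Finset.sum_ite_eq]

theorem aeval_X_zero_mem_span_iff {A : Type*} [CommRing A] (m n : ℕ) (f : Polynomial A) :
    Polynomial.aeval (X 0) f ∈
        Ideal.span ({X 0 ^ m + X 1 ^ 2, X 0 ^ n} : Set (MvPolynomial (Fin 2) A)) ↔
      Polynomial.X ^ n ∣ f := by
  constructor
  · intro hf
    set S := AdjoinRoot (Polynomial.X ^ n : Polynomial A)
    set x : S := AdjoinRoot.root _
    rw [← AdjoinRoot.mk_eq_zero]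
    rcases subsingleton_or_nontrivial S with hS | hS
    · exact Subsingleton.elim _ _
    set g : Polynomial S := Polynomial.X ^ 2 + Polynomial.C (x ^ m)
    have hg : g.Monic := Polynomial.monic_X_pow_add_C _ two_ne_zero
    set ψ : MvPolynomial (Fin 2) A →ₐ[A] AdjoinRoot g :=
      aeval ![algebraMap S (AdjoinRoot g) x, AdjoinRoot.root g]
    have hψu : ψ (X 0) = algebraMap S _ x := by simp [ψ]
    have hψv : ψ (X 1) = AdjoinRoot.root g := by simp [ψ]
    have hψ : Ideal.span {X 0 ^ m + X 1 ^ 2, X 0 ^ n} ≤ RingHom.ker ψ := by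
      rw [Ideal.span_le, Set.insert_subset_iff, Set.singleton_subset_iff]
      constructor
      · have hroot : AdjoinRoot.root g ^ 2 + algebraMap S _ (x ^ m) = 0 := by
          have := AdjoinRoot.eval₂_root g
          simp only [g, Polynomial.eval₂_add, Polynomial.eval₂_X_pow, Polynomial.eval₂_C]
            at this
          exact this
        simp only [SetLike.mem_coe, RingHom.mem_ker, map_add, map_pow, hψu, hψv]
        rw [← map_pow, add_comm, hroot]
      · have hxn : x ^ n = 0 := by
          have h := AdjoinRoot.mk_self (f := (Polynomial.X ^ n : Polynomial A))
          rwa [map_pow, AdjoinRoot.mk_X] at h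
        change ψ (X 0 ^ n) = 0
        rw [map_pow, hψu, ← map_pow, hxn, map_zero]
    refine AdjoinRoot.algebraMap_injective_of_monic hg
      (by rw [Polynomial.natDegree_X_pow_add_C]; norm_num) ?_
    rw [map_zero, ← hψ hf, ← Polynomial.aeval_algHom_apply, hψu,
      Polynomial.aeval_algebraMap_apply, AdjoinRoot.aeval_eq]
  · rintro ⟨g, rfl⟩
    rw [map_mul, map_pow, Polynomial.aeval_X]
    exact Ideal.mul_mem_right _ _ (Ideal.subset_span (by simp))

theorem Polynomial.X_pow_pow_dvd_sum_sub_iff {A : Type*} [CommRing A] {p s : ℕ} (hp : 1 < p)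
    (hs : 2 ≤ s) (a : ℕ → A) (b : A) :
    X ^ p ^ s ∣ ∑ i ∈ Finset.range s, C (a i) * X ^ p ^ (i + 1) - C b * X ^ p ↔
      b = a 0 ∧ ∀ i, 1 ≤ i → i ≤ s - 2 → a i = 0 := by
  have he : Function.Injective fun i => p ^ (i + 1) :=
    fun i j h => Nat.succ_injective (Nat.pow_right_injective hp h)
  constructor
  · intro h
    have hcoeff : ∀ k, k + 1 < s → a k - (if k = 0 then b else 0) = 0 := fun k hk => by
      have hk' := (X_pow_dvd_iff.1 h) (p ^ (k + 1)) (Nat.pow_lt_pow_right hp hk)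
      rw [coeff_sub, coeff_sum_C_mul_X_pow_of_injective he, if_pos (Finset.mem_range.2 (by omega)),
        coeff_C_mul_X_pow] at hk'
      simpa only [Nat.pow_eq_self_iff hp, Nat.add_eq_right] using hk'
    refine ⟨?_, fun i hi his => ?_⟩
    · exact (sub_eq_zero.1 (by simpa using hcoeff 0 (by omega))).symm
    · simpa [show i ≠ 0 by omega] using hcoeff i (by omega)
  · rintro ⟨rfl, hmid⟩
    obtain ⟨t, rfl⟩ : ∃ t, s = t + 2 := ⟨s - 2, by omega⟩
    have hzero :
        ∑ i ∈ Finset.range t, C (a (i + 1)) * (X : Polynomial A) ^ p ^ (i + 1 + 1) = 0 :=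
      Finset.sum_eq_zero fun i hi => by
        rw [hmid (i + 1) (by omega) (by simp at hi; omega), C_0, zero_mul]
    rw [Finset.sum_range_succ, Finset.sum_range_succ', hzero]
    exact ⟨C (a (t + 1)), by ring⟩

theorem statement7_general {A : Type} [CommRing A] (p : ℕ) (hp : Nat.Prime p)
    (hpA : (p : A) = 0) (s : ℕ) (hs : 2 ≤ s) (μ : A) (c : ℕ → A)
    (I : Ideal (MvPolynomial (Fin 2) A))
    (hI : I = Ideal.span {X 0 ^ p + X 1 ^ 2, X 0 ^ p ^ s}) :
    (Ideal.Quotient.mk I (∑ i ∈ Finset.range s, C (c i) * X 0 ^ p ^ i)) ^ p +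
        (Ideal.Quotient.mk I (C μ * X 1)) ^ 2 = 0 ↔
      (μ ^ 2 = c 0 ^ p ∧ ∀ i : ℕ, 1 ≤ i → i ≤ s - 2 → c i ^ p = 0) := by
  subst hI
  have hpA' : (p : MvPolynomial (Fin 2) A) = 0 := by rw [← map_natCast C, hpA, map_zero]
  set P : Polynomial A :=
    ∑ i ∈ Finset.range s, Polynomial.C (c i ^ p) * Polynomial.X ^ p ^ (i + 1) -
      Polynomial.C (μ ^ 2) * Polynomial.X ^ p
  have hsplit : (∑ i ∈ Finset.range s, C (c i) * X 0 ^ p ^ i) ^ p + (C μ * X 1) ^ 2 =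
      Polynomial.aeval (X 0) P + C (μ ^ 2) * (X 0 ^ p + X 1 ^ 2 : MvPolynomial (Fin 2) A) := by
    simp only [sum_mul_pow_pow_of_prime hp hpA', P, map_sub, map_sum, map_mul, map_pow,
      Polynomial.aeval_C, Polynomial.aeval_X, MvPolynomial.algebraMap_eq]
    ring
  have hrel : C (μ ^ 2) * (X 0 ^ p + X 1 ^ 2) ∈
      Ideal.span ({X 0 ^ p + X 1 ^ 2, X 0 ^ p ^ s} : Set (MvPolynomial (Fin 2) A)) :=
    Ideal.mul_mem_left _ _ (Ideal.subset_span (Set.mem_insert _ _))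
  rw [← map_pow, ← map_pow, ← map_add, Ideal.Quotient.eq_zero_iff_mem, hsplit,
    Ideal.add_mem_iff_left _ hrel, aeval_X_zero_mem_span_iff,
    Polynomial.X_pow_pow_dvd_sum_sub_iff hp.one_lt hs]

/-- In `R = A[u,v]/(u^p + v², u^{p^s})` (with `u = X 0`, `v = X 1`), the elements
`u' = Σ_{i=0}^{s−1} c_i u^{p^i}` and `v' = μ·v` satisfy `u'^p + v'² = 0` if and only if
`μ² = c_0^p` and `c_i^p = 0` for `1 ≤ i ≤ s−2`. -/
theorem statement7 {A : Type} [CommRing A] (p : ℕ) (hp : Nat.Prime p) (hodd : Odd p)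
    (hpA : (p : A) = 0) (s : ℕ) (hs : 2 ≤ s) (μ : A) (c : ℕ → A)
    (I : Ideal (MvPolynomial (Fin 2) A))
    (hI : I = Ideal.span {X 0 ^ p + X 1 ^ 2, X 0 ^ p ^ s}) :
    (Ideal.Quotient.mk I (∑ i ∈ Finset.range s, C (c i) * X 0 ^ p ^ i)) ^ p +
        (Ideal.Quotient.mk I (C μ * X 1)) ^ 2 = 0 ↔
      (μ ^ 2 = c 0 ^ p ∧ ∀ i : ℕ, 1 ≤ i → i ≤ s - 2 → c i ^ p = 0) :=
  statement7_general p hp hpA s hs μ c I hI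
end

section
/- Let k be a field of characteristic p ≥ 3 and let r ≥ 1. Let C be the polynomial ring over k in the variables τ, θ, and σ_j for j ≥ 1, and let J be the ideal of C generated by τ², by θ^{p^{r−1}} − σ_1, and by σ_i σ_j − binom(i+j, i)·σ_{i+j} for all i, j ≥ 1 (where binom denotes the binomial coefficient reduced into k). Then the images in C/J of the monomials θ^i σ_j and τ θ^i σ_j, for 0 ≤ i < p^{r−1} and j ∈ ℕ (with σ_0 interpreted as 1), form a k-vector-space basis of C/J. -/
open MvPolynomial

/-- The generators `σ_j` of the coordinate algebra `k[M_r]`: `σ_0 = 1` and, for `j ≥ 1`,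
`σ_j` is the polynomial variable indexed by `Sum.inr (j − 1)`.  The variable indexed by
`Sum.inl true` is `τ` and the one indexed by `Sum.inl false` is `θ`. -/
noncomputable def sig (k : Type) [Field k] (j : ℕ) : MvPolynomial (Bool ⊕ ℕ) k :=
  if j = 0 then 1 else X (Sum.inr (j - 1))

/-!
Write `q = p^(r-1)`. Modulo `J`, multiplying `τ^ε θ^i σ_j` by `τ`, `θ` or `σ_n` gives zero or
a multiple of another such monomial (by `τ² = 0`, `θ^q = σ_1` and
`σ_i σ_j = binom(i+j, i) σ_{i+j}`), so their span is an ideal containing `1`, hence everything.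

For independence, read `σ_j` as the divided power `x^j / j!` and `θ` as a `q`-th root of `x`.
The monomial `τ^a θ^b ∏ σ_s^(e_s)` then has the normal form `0` if `a ≥ 2` and otherwise
`(n + b / q)! / ∏ (s!)^(e_s) · τ^a θ^(b % q) σ_(n + b / q)` with `n = ∑ s e_s`.
Extended linearly, this normal form kills `J` and sends the monomials of the statement to the
standard basis of `Fin 2 × Fin q × ℕ →₀ k`.
-/

theorem Nat.factorial_pow_dvd_factorial_mul (a e : ℕ) :
    a.factorial ^ e ∣ (e * a).factorial := by
  induction e with
  | zero => simp
  | succ n ih =>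
    rw [pow_succ, Nat.succ_mul]
    exact (mul_dvd_mul ih dvd_rfl).trans (Nat.factorial_mul_factorial_dvd_factorial_add _ _)

theorem Nat.div_factorial_mul_factorial_eq_choose_mul_div (D a b F : ℕ) (hD : 0 < D)
    (hdvd : D * (a + b).factorial ∣ F) :
    F / (D * (a.factorial * b.factorial)) =
      (a + b).choose a * (F / (D * (a + b).factorial)) := by
  obtain ⟨E, rfl⟩ := hdvd
  rw [Nat.mul_div_cancel_left _ (by positivity)]
  refine Nat.div_eq_of_eq_mul_left (by positivity) ?_
  rw [← Nat.add_choose_mul_factorial_mul_factorial, Nat.choose_symm_add]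
  ring

namespace MrCoord

noncomputable section

variable {k : Type} [Field k]

def relations (k : Type) [Field k] (q : ℕ) : Set (MvPolynomial (Bool ⊕ ℕ) k) :=
  {X (Sum.inl true) ^ 2, X (Sum.inl false) ^ q - sig k 1} ∪
    {g | ∃ i j : ℕ, 1 ≤ i ∧ 1 ≤ j ∧
      g = sig k i * sig k j - C ((Nat.choose (i + j) i : k)) * sig k (i + j)}

def basisMonomial (k : Type) [Field k] (q : ℕ) (e : Fin 2 × Fin q × ℕ) :
    MvPolynomial (Bool ⊕ ℕ) k :=
  X (Sum.inl true) ^ (e.1 : ℕ) * X (Sum.inl false) ^ (e.2.1 : ℕ) * sig k e.2.2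

def sigExponent (j : ℕ) : (Bool ⊕ ℕ) →₀ ℕ :=
  if j = 0 then 0 else Finsupp.single (Sum.inr (j - 1)) 1

theorem sig_eq_monomial (j : ℕ) : sig k j = monomial (sigExponent j) 1 := by
  unfold sig sigExponent
  split_ifs <;> rfl

@[simp]
theorem sigExponent_apply_inl (j : ℕ) (b : Bool) : sigExponent j (Sum.inl b) = 0 := by
  unfold sigExponent
  split_ifs <;> simp

theorem sig_zero : sig k 0 = 1 := if_pos rfl

theorem X_inr_eq_sig (n : ℕ) :
    (X (Sum.inr n) : MvPolynomial (Bool ⊕ ℕ) k) = sig k (n + 1) := by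
  rw [sig, if_neg n.succ_ne_zero, Nat.add_sub_cancel]

theorem monomial_eq_smul_monomial_one (u : (Bool ⊕ ℕ) →₀ ℕ) (a : k) :
    (monomial u a : MvPolynomial (Bool ⊕ ℕ) k) = a • monomial u 1 := by
  rw [smul_monomial, smul_eq_mul, mul_one]

def basisExponent {q : ℕ} (e : Fin 2 × Fin q × ℕ) : (Bool ⊕ ℕ) →₀ ℕ :=
  Finsupp.single (Sum.inl true) (e.1 : ℕ) + Finsupp.single (Sum.inl false) (e.2.1 : ℕ) +
    sigExponent e.2.2

theorem basisMonomial_eq_monomial {q : ℕ} (e : Fin 2 × Fin q × ℕ) :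
    basisMonomial k q e = monomial (basisExponent e) 1 := by
  rw [basisMonomial, basisExponent, sig_eq_monomial, X_pow_eq_monomial, X_pow_eq_monomial,
    monomial_mul, monomial_mul, one_mul, one_mul]

def sigmaIndex : Bool ⊕ ℕ → ℕ := Sum.elim 0 (· + 1)

abbrev sigmaDegree : ((Bool ⊕ ℕ) →₀ ℕ) →+ ℕ := Finsupp.weight sigmaIndex

def sigmaDenom (u : (Bool ⊕ ℕ) →₀ ℕ) : ℕ :=
  u.prod fun s e => (sigmaIndex s).factorial ^ e

theorem sigmaDegree_single (s : Bool ⊕ ℕ) (e : ℕ) :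
    sigmaDegree (Finsupp.single s e) = e * sigmaIndex s := by
  simp [Finsupp.weight_apply, Finsupp.sum_single_index]

theorem sigmaDenom_add (u v : (Bool ⊕ ℕ) →₀ ℕ) :
    sigmaDenom (u + v) = sigmaDenom u * sigmaDenom v :=
  Finsupp.prod_add_index' (fun _ => pow_zero _) (fun _ _ _ => pow_add _ _ _)

theorem sigmaDenom_single (s : Bool ⊕ ℕ) (e : ℕ) :
    sigmaDenom (Finsupp.single s e) = (sigmaIndex s).factorial ^ e :=
  Finsupp.prod_single_index (pow_zero _)

theorem sigmaDenom_dvd_factorial (u : (Bool ⊕ ℕ) →₀ ℕ) :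
    sigmaDenom u ∣ (sigmaDegree u).factorial :=
  (Finset.prod_dvd_prod_of_dvd _ _ fun _ _ => Nat.factorial_pow_dvd_factorial_mul _ _).trans
    (Nat.prod_factorial_dvd_factorial_sum _ _)

theorem sigmaDegree_sigExponent (j : ℕ) : sigmaDegree (sigExponent j) = j := by
  unfold sigExponent
  split_ifs with hj
  · simp [hj]
  · simp only [sigmaDegree_single, sigmaIndex, Sum.elim_inr]
    omega

theorem sigmaDenom_sigExponent (j : ℕ) : sigmaDenom (sigExponent j) = j.factorial := by
  unfold sigExponent
  split_ifs with hj
  · simp [hj, sigmaDenom]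
  · simp only [sigmaDenom_single, sigmaIndex, Sum.elim_inr, pow_one]
    congr
    omega

variable (q : ℕ) [NeZero q]

def normalFormOf (a b n D : ℕ) : (Fin 2 × Fin q × ℕ) →₀ k :=
  if h : a < 2 then
    Finsupp.single (⟨a, h⟩, Fin.ofNat q b, n + b / q) (((n + b / q).factorial / D : ℕ) : k)
  else 0

theorem normalFormOf_of_two_le {a : ℕ} (b n D : ℕ) (ha : 2 ≤ a) :
    normalFormOf (k := k) q a b n D = 0 :=
  dif_neg (by omega)

theorem normalFormOf_add_right (a b n D : ℕ) :
    normalFormOf (k := k) q a (b + q) n D = normalFormOf q a b (n + 1) D := by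
  have hq : 0 < q := Nat.pos_of_neZero q
  unfold normalFormOf
  split_ifs
  · congr 2
    · ext <;> simp [Nat.add_div_right _ hq]
      omega
    · rw [Nat.add_div_right _ hq, Nat.add_assoc, Nat.add_comm 1]
  · rfl

theorem normalFormOf_factorial_mul_factorial (a b n D i j : ℕ) (hD : D ∣ n.factorial) :
    normalFormOf (k := k) q a b (n + (i + j)) (D * (i.factorial * j.factorial)) =
      ((i + j).choose i : k) • normalFormOf q a b (n + (i + j)) (D * (i + j).factorial) := by
  unfold normalFormOf
  split_ifs
  · have hdvd : D * (i + j).factorial ∣ (n + (i + j) + b / q).factorial :=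
      (mul_dvd_mul hD dvd_rfl).trans <| (Nat.factorial_mul_factorial_dvd_factorial_add _ _).trans <|
        Nat.factorial_dvd_factorial (Nat.le_add_right _ _)
    have hD₀ : 0 < D := Nat.pos_of_dvd_of_pos hD (Nat.factorial_pos n)
    rw [Finsupp.smul_single, Nat.div_factorial_mul_factorial_eq_choose_mul_div D i j _ hD₀ hdvd,
      Nat.cast_mul, smul_eq_mul]
  · rw [smul_zero]

theorem normalFormOf_basis (e : Fin 2 × Fin q × ℕ) :
    normalFormOf (k := k) q e.1 e.2.1 e.2.2 e.2.2.factorial = Finsupp.single e 1 := by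
  obtain ⟨a, b, j⟩ := e
  rw [normalFormOf, dif_pos a.isLt, Nat.div_eq_of_lt b.isLt, add_zero,
    Nat.div_self (Nat.factorial_pos j), Nat.cast_one]
  congr
  simp

def normalForm (u : (Bool ⊕ ℕ) →₀ ℕ) : (Fin 2 × Fin q × ℕ) →₀ k :=
  normalFormOf q (u (Sum.inl true)) (u (Sum.inl false)) (sigmaDegree u) (sigmaDenom u)

theorem normalForm_add_tau_sq (u : (Bool ⊕ ℕ) →₀ ℕ) :
    normalForm (k := k) q (u + Finsupp.single (Sum.inl true) 2) = 0 :=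
  normalFormOf_of_two_le q _ _ _ (by simp)

theorem normalForm_add_theta_pow (u : (Bool ⊕ ℕ) →₀ ℕ) :
    normalForm (k := k) q (u + Finsupp.single (Sum.inl false) q) =
      normalForm q (u + sigExponent 1) := by
  simp only [normalForm, Finsupp.add_apply, Finsupp.single_apply, map_add, sigmaDenom_add,
    sigmaDegree_single, sigmaDegree_sigExponent, sigmaDenom_single, sigmaDenom_sigExponent]
  simpa [sigmaIndex] using normalFormOf_add_right q _ _ _ _

theorem normalForm_add_sigExponent_add (u : (Bool ⊕ ℕ) →₀ ℕ) (i j : ℕ) :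
    normalForm (k := k) q (u + sigExponent i + sigExponent j) =
      ((i + j).choose i : k) • normalForm q (u + sigExponent (i + j)) := by
  simp only [normalForm, Finsupp.add_apply, sigExponent_apply_inl, add_zero, map_add,
    sigmaDegree_sigExponent, sigmaDenom_add, sigmaDenom_sigExponent, add_assoc]
  exact normalFormOf_factorial_mul_factorial q _ _ _ _ i j (sigmaDenom_dvd_factorial u)

theorem normalForm_basisExponent (e : Fin 2 × Fin q × ℕ) :
    normalForm (k := k) q (basisExponent e) = Finsupp.single e 1 := by
  simp only [normalForm, basisExponent, Finsupp.add_apply, Finsupp.single_apply, map_add,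
    sigmaDenom_add, sigmaDegree_single, sigmaDegree_sigExponent, sigmaDenom_single,
    sigmaDenom_sigExponent]
  simpa [sigmaIndex] using normalFormOf_basis (k := k) q e

def normalFormMap : MvPolynomial (Bool ⊕ ℕ) k →ₗ[k] (Fin 2 × Fin q × ℕ) →₀ k :=
  (basisMonomials (Bool ⊕ ℕ) k).constr k (normalForm q)

theorem normalFormMap_monomial (u : (Bool ⊕ ℕ) →₀ ℕ) (a : k) :
    normalFormMap q (monomial u a) = a • normalForm q u := by
  rw [monomial_eq_smul_monomial_one, map_smul, normalFormMap,
    ← (basisMonomials (Bool ⊕ ℕ) k).constr_basis k (normalForm q) u, coe_basisMonomials]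

theorem normalFormMap_monomial_mul_eq_zero {g : MvPolynomial (Bool ⊕ ℕ) k}
    (hg : g ∈ relations k q) (u : (Bool ⊕ ℕ) →₀ ℕ) :
    normalFormMap q (monomial u 1 * g) = 0 := by
  rcases hg with (rfl | rfl) | ⟨i, j, hi, hj, rfl⟩
  · rw [X_pow_eq_monomial, monomial_mul, normalFormMap_monomial, normalForm_add_tau_sq, smul_zero]
  · rw [X_pow_eq_monomial, sig_eq_monomial, mul_sub, monomial_mul, monomial_mul, map_sub,
      normalFormMap_monomial, normalFormMap_monomial, normalForm_add_theta_pow, sub_self]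
  · rw [sig_eq_monomial, sig_eq_monomial, sig_eq_monomial, C_mul_monomial, monomial_mul, mul_sub,
      monomial_mul, monomial_mul, map_sub, normalFormMap_monomial, normalFormMap_monomial,
      ← add_assoc, normalForm_add_sigExponent_add]
    simp only [one_smul, one_mul, mul_one, sub_self]

theorem normalFormMap_mul_eq_zero {g : MvPolynomial (Bool ⊕ ℕ) k} (hg : g ∈ relations k q)
    (P : MvPolynomial (Bool ⊕ ℕ) k) : normalFormMap q (P * g) = 0 := by
  induction P using MvPolynomial.induction_on' with
  | monomial u a =>
    rw [monomial_eq_smul_monomial_one, smul_mul_assoc, map_smul,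
      normalFormMap_monomial_mul_eq_zero q hg, smul_zero]
  | add P Q hP hQ => rw [add_mul, map_add, hP, hQ, add_zero]

theorem normalFormMap_eq_zero_of_mem {x : MvPolynomial (Bool ⊕ ℕ) k}
    (hx : x ∈ Ideal.span (relations k q)) : normalFormMap q x = 0 := by
  suffices ∀ P, normalFormMap q (P * x) = 0 by simpa using this 1
  induction hx using Submodule.span_induction with
  | mem g hg => exact normalFormMap_mul_eq_zero q hg
  | zero => simp
  | add y z _ _ hy hz => simp [mul_add, hy, hz]
  | smul c y _ hy => intro P; rw [smul_eq_mul, ← mul_assoc, hy]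

theorem normalFormMap_basisMonomial (e : Fin 2 × Fin q × ℕ) :
    normalFormMap q (basisMonomial k q e) = Finsupp.single e 1 := by
  rw [basisMonomial_eq_monomial, normalFormMap_monomial, one_smul, normalForm_basisExponent]

theorem linearIndependent_mk_basisMonomial {J : Ideal (MvPolynomial (Bool ⊕ ℕ) k)}
    (hJ : J ≤ Ideal.span (relations k q)) :
    LinearIndependent k fun e => Ideal.Quotient.mk J (basisMonomial k q e) := by
  let ψ := (J.restrictScalars k).liftQ (normalFormMap q)
    (fun x hx => normalFormMap_eq_zero_of_mem q (hJ hx)) ∘ₗ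
      (Submodule.Quotient.restrictScalarsEquiv k J).symm.toLinearMap
  have hψ : ψ ∘ (fun e => Ideal.Quotient.mk J (basisMonomial k q e)) =
      fun e => Finsupp.single e 1 :=
    funext (normalFormMap_basisMonomial q)
  exact .of_comp ψ (hψ ▸ Finsupp.linearIndependent_single_one k _)

section Spanning

variable {q : ℕ} {J : Ideal (MvPolynomial (Bool ⊕ ℕ) k)}

theorem mk_C_mul (c : k) (y : MvPolynomial (Bool ⊕ ℕ) k ⧸ J) :
    Ideal.Quotient.mk J (C c) * y = c • y := by
  rw [← algebraMap_eq, Ideal.Quotient.mk_algebraMap, ← Algebra.smul_def]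

theorem mk_X_tau_sq (hJ : relations k q ⊆ J) :
    Ideal.Quotient.mk J (X (Sum.inl true)) ^ 2 = 0 := by
  rw [← map_pow, Ideal.Quotient.eq_zero_iff_mem]
  exact hJ (Or.inl (Set.mem_insert _ _))

theorem mk_X_theta_pow (hJ : relations k q ⊆ J) :
    Ideal.Quotient.mk J (X (Sum.inl false)) ^ q = Ideal.Quotient.mk J (sig k 1) := by
  rw [← map_pow, Ideal.Quotient.mk_eq_mk_iff_sub_mem]
  exact hJ (Or.inl (Set.mem_insert_of_mem _ rfl))

theorem mk_sig_mul_sig (hJ : relations k q ⊆ J) (i j : ℕ) :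
    Ideal.Quotient.mk J (sig k i) * Ideal.Quotient.mk J (sig k j) =
      ((i + j).choose i : k) • Ideal.Quotient.mk J (sig k (i + j)) := by
  rcases Nat.eq_zero_or_pos i with rfl | hi
  · simp [sig_zero]
  rcases Nat.eq_zero_or_pos j with rfl | hj
  · simp [sig_zero]
  rw [← mk_C_mul, ← map_mul, ← map_mul, Ideal.Quotient.mk_eq_mk_iff_sub_mem]
  exact hJ (Or.inr ⟨i, j, hi, hj, rfl⟩)

theorem mk_basisMonomial (e : Fin 2 × Fin q × ℕ) :
    Ideal.Quotient.mk J (basisMonomial k q e) =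
      Ideal.Quotient.mk J (X (Sum.inl true)) ^ (e.1 : ℕ) *
        Ideal.Quotient.mk J (X (Sum.inl false)) ^ (e.2.1 : ℕ) *
          Ideal.Quotient.mk J (sig k e.2.2) := by
  simp only [basisMonomial, map_mul, map_pow]

abbrev basisSpan (J : Ideal (MvPolynomial (Bool ⊕ ℕ) k)) (q : ℕ) :
    Submodule k (MvPolynomial (Bool ⊕ ℕ) k ⧸ J) :=
  Submodule.span k (Set.range fun e => Ideal.Quotient.mk J (basisMonomial k q e))

theorem mk_basisMonomial_mem_basisSpan (e : Fin 2 × Fin q × ℕ) :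
    Ideal.Quotient.mk J (basisMonomial k q e) ∈ basisSpan J q :=
  Submodule.subset_span ⟨e, rfl⟩

theorem mk_basisMonomial_mul_X_theta_mem [NeZero q] (hJ : relations k q ⊆ J)
    (e : Fin 2 × Fin q × ℕ) :
    Ideal.Quotient.mk J (basisMonomial k q e) * Ideal.Quotient.mk J (X (Sum.inl false)) ∈
      basisSpan J q := by
  obtain ⟨⟨a, ha⟩, ⟨b, hb⟩, j⟩ := e
  have mem := mk_basisMonomial_mem_basisSpan (J := J) (q := q)
  simp only [mk_basisMonomial] at mem ⊢
  set τ := Ideal.Quotient.mk J (X (Sum.inl true))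
  set θ := Ideal.Quotient.mk J (X (Sum.inl false))
  rcases Nat.lt_or_ge (b + 1) q with hb1 | hb1
  · convert mem (⟨a, ha⟩, ⟨b + 1, hb1⟩, j) using 1
    dsimp only
    ring
  obtain rfl : q = b + 1 := by omega
  have hθ := mk_X_theta_pow hJ
  have hσ := mk_sig_mul_sig hJ 1 j
  have : τ ^ a * θ ^ b * Ideal.Quotient.mk J (sig k j) * θ =
      ((1 + j).choose 1 : k) • (τ ^ a * θ ^ 0 * Ideal.Quotient.mk J (sig k (1 + j))) := by
    rw [← mk_C_mul] at hσ ⊢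
    linear_combination τ ^ a * Ideal.Quotient.mk J (sig k j) * hθ + τ ^ a * hσ
  rw [this]
  exact Submodule.smul_mem _ _ (mem (⟨a, ha⟩, 0, 1 + j))

theorem mk_basisMonomial_mul_X_tau_mem (hJ : relations k q ⊆ J) (e : Fin 2 × Fin q × ℕ) :
    Ideal.Quotient.mk J (basisMonomial k q e) * Ideal.Quotient.mk J (X (Sum.inl true)) ∈
      basisSpan J q := by
  obtain ⟨⟨a, ha⟩, b, j⟩ := e
  have mem := mk_basisMonomial_mem_basisSpan (J := J) (q := q)
  simp only [mk_basisMonomial] at mem ⊢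
  set τ := Ideal.Quotient.mk J (X (Sum.inl true))
  interval_cases a
  · convert mem (⟨1, one_lt_two⟩, b, j) using 1
    dsimp only
    ring
  · have : τ ^ 1 * Ideal.Quotient.mk J (X (Sum.inl false)) ^ (b : ℕ) *
        Ideal.Quotient.mk J (sig k j) * τ = 0 := by
      linear_combination Ideal.Quotient.mk J (X (Sum.inl false)) ^ (b : ℕ) *
        Ideal.Quotient.mk J (sig k j) * mk_X_tau_sq hJ
    rw [this]
    exact Submodule.zero_mem _

theorem mk_basisMonomial_mul_X_inr_mem (hJ : relations k q ⊆ J) (e : Fin 2 × Fin q × ℕ)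
    (n : ℕ) :
    Ideal.Quotient.mk J (basisMonomial k q e) * Ideal.Quotient.mk J (X (Sum.inr n)) ∈
      basisSpan J q := by
  rw [mk_basisMonomial, X_inr_eq_sig, mul_assoc, mk_sig_mul_sig hJ, mul_smul_comm,
    ← mk_basisMonomial (e := (e.1, e.2.1, e.2.2 + (n + 1)))]
  exact Submodule.smul_mem _ _ (mk_basisMonomial_mem_basisSpan _)

theorem basisSpan_eq_top [NeZero q] (hJ : relations k q ⊆ J) : basisSpan J q = ⊤ := by
  have mul_X_mem (s : Bool ⊕ ℕ) : basisSpan J q ≤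
      (basisSpan J q).comap (LinearMap.mulRight k (Ideal.Quotient.mk J (X s))) := by
    refine Submodule.span_le.2 <| Set.range_subset_iff.2 fun e => ?_
    rw [SetLike.mem_coe, Submodule.mem_comap, LinearMap.mulRight_apply]
    rcases s with (_ | _) | n
    · exact mk_basisMonomial_mul_X_theta_mem hJ e
    · exact mk_basisMonomial_mul_X_tau_mem hJ e
    · exact mk_basisMonomial_mul_X_inr_mem hJ e n
  have one_mem : (1 : MvPolynomial (Bool ⊕ ℕ) k ⧸ J) ∈ basisSpan J q := by
    simpa [mk_basisMonomial, sig_zero] using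
      mk_basisMonomial_mem_basisSpan (J := J) (0, ⟨0, Nat.pos_of_neZero q⟩, 0)
  rw [eq_top_iff]
  rintro x -
  obtain ⟨P, rfl⟩ := Ideal.Quotient.mk_surjective x
  induction P using MvPolynomial.induction_on with
  | C c => simpa [← mk_C_mul] using (basisSpan J q).smul_mem c one_mem
  | add P Q hP hQ => rw [map_add]; exact (basisSpan J q).add_mem hP hQ
  | mul_X P s hP => rw [map_mul]; exact mul_X_mem s hP

end Spanning

end

end MrCoord

open MrCoord in
theorem statement8_general {k : Type} [Field k] (p : ℕ) (hp : Nat.Prime p) (r : ℕ)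
    (J : Ideal (MvPolynomial (Bool ⊕ ℕ) k))
    (hJ : J = Ideal.span
      ({X (Sum.inl true) ^ 2, X (Sum.inl false) ^ p ^ (r - 1) - sig k 1} ∪
        {q | ∃ i j : ℕ, 1 ≤ i ∧ 1 ≤ j ∧
          q = sig k i * sig k j - C ((Nat.choose (i + j) i : k)) * sig k (i + j)}))
    (fam : Fin 2 × Fin (p ^ (r - 1)) × ℕ → MvPolynomial (Bool ⊕ ℕ) k ⧸ J)
    (hfam : ∀ e, fam e = Ideal.Quotient.mk J
      (X (Sum.inl true) ^ ((e.1 : ℕ)) * X (Sum.inl false) ^ ((e.2.1 : ℕ)) * sig k e.2.2)) :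
    LinearIndependent k fam ∧ Submodule.span k (Set.range fam) = ⊤ := by
  have : NeZero (p ^ (r - 1)) := ⟨(pow_pos hp.pos _).ne'⟩
  obtain rfl : fam = fun e => Ideal.Quotient.mk J (basisMonomial k _ e) := funext hfam
  subst hJ
  exact ⟨linearIndependent_mk_basisMonomial _ le_rfl, basisSpan_eq_top Ideal.subset_span⟩

/-- Basis of the coordinate algebra `k[M_r] = C/J`, where `C` is the polynomial ring on
`τ`, `θ`, and `σ_j` (`j ≥ 1`) and `J` is generated by `τ²`, `θ^{p^{r−1}} − σ_1`, and
`σ_i σ_j − binom(i+j, i)·σ_{i+j}`: the images of the monomials `τ^ε θ^i σ_j` for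
`ε ∈ {0,1}`, `0 ≤ i < p^{r−1}`, `j ∈ ℕ` form a `k`-vector-space basis. -/
theorem statement8 {k : Type} [Field k] (p : ℕ) (hp : Nat.Prime p) (hp3 : 3 ≤ p)
    (hchar : CharP k p) (r : ℕ) (hr : 1 ≤ r)
    (J : Ideal (MvPolynomial (Bool ⊕ ℕ) k))
    (hJ : J = Ideal.span
      ({X (Sum.inl true) ^ 2, X (Sum.inl false) ^ p ^ (r - 1) - sig k 1} ∪
        {q | ∃ i j : ℕ, 1 ≤ i ∧ 1 ≤ j ∧
          q = sig k i * sig k j - C ((Nat.choose (i + j) i : k)) * sig k (i + j)}))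
    (fam : Fin 2 × Fin (p ^ (r - 1)) × ℕ → MvPolynomial (Bool ⊕ ℕ) k ⧸ J)
    (hfam : ∀ e, fam e = Ideal.Quotient.mk J
      (X (Sum.inl true) ^ ((e.1 : ℕ)) * X (Sum.inl false) ^ ((e.2.1 : ℕ)) * sig k e.2.2)) :
    LinearIndependent k fam ∧ Submodule.span k (Set.range fam) = ⊤ :=
  statement8_general p hp r J hJ fam hfam
end

section
/- Let p be a prime, let j be a natural number with base-p expansion j = Σ_{i=0}^{ℓ} j_i p^i where 0 ≤ j_i < p. Then the product Π_{i=0}^{ℓ} ((p^i)!)^{j_i} divides j!, and the quotient j! / Π_{i=0}^{ℓ} ((p^i)!)^{j_i} is congruent to Π_{i=0}^{ℓ} (j_i!) modulo p. -/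
open Finset Nat

private lemma sum_digits_lt (p : ℕ) (hp : 0 < p) (d : ℕ → ℕ) :
    ∀ n, (∀ i, i < n → d i < p) → ∑ i ∈ range n, d i * p ^ i < p ^ n := by
  intro n
  induction n with
  | zero => simp
  | succ n ih =>
    intro h
    rw [sum_range_succ, pow_succ]
    have h1 : ∑ i ∈ range n, d i * p ^ i < p ^ n :=
      ih fun i hi => h i (hi.trans (Nat.lt_succ_self n))
    have h2 : d n * p ^ n ≤ (p - 1) * p ^ n :=
      Nat.mul_le_mul_right _ (by have := h n (Nat.lt_succ_self n); omega)
    have key : p ^ n + (p - 1) * p ^ n = p ^ n * p := by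
      have hp1 : p = (p - 1) + 1 := by omega
      calc p ^ n + (p - 1) * p ^ n = ((p - 1) + 1) * p ^ n := by ring
      _ = p * p ^ n := by rw [← hp1]
      _ = p ^ n * p := mul_comm _ _
    omega

private lemma pow_digit_bound (p : ℕ) (hp : 1 < p) (L a : ℕ) (ha : a < p) :
    a * p ^ L + p ^ L ≤ p ^ (L + 1) := by
  have : a * p ^ L ≤ (p - 1) * p ^ L := Nat.mul_le_mul_right _ (by omega)
  have key : (p - 1) * p ^ L + p ^ L = p ^ (L + 1) := by
    have hp1 : p = (p - 1) + 1 := by omega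
    calc (p - 1) * p ^ L + p ^ L = ((p - 1) + 1) * p ^ L := by ring
    _ = p * p ^ L := by rw [← hp1]
    _ = p ^ (L + 1) := by rw [pow_succ]; ring
  omega

private lemma lucas_pow (p : ℕ) (hp : p.Prime) (L t : ℕ) (ht : t < p) :
    (((t * p ^ L).choose (p ^ L) : ℕ) : ZMod p) = (t : ZMod p) := by
  haveI := Fact.mk hp
  have hpos : ∀ i : ℕ, 0 < p ^ i := fun i => pow_pos hp.pos i
  have hn : t * p ^ L < p ^ (L + 1) := by
    have := pow_digit_bound p hp.one_lt L t ht
    have := hpos L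
    omega
  have hk : p ^ L < p ^ (L + 1) :=
    Nat.pow_lt_pow_right hp.one_lt (Nat.lt_succ_self L)
  have h := Choose.choose_modEq_prod_range_choose_nat (p := p) hn hk
  have hprod : ∏ i ∈ range (L + 1),
      (t * p ^ L / p ^ i % p).choose (p ^ L / p ^ i % p) = t := by
    rw [prod_range_succ]
    have hL1 : t * p ^ L / p ^ L % p = t := by
      rw [Nat.mul_div_cancel _ (hpos L), Nat.mod_eq_of_lt ht]
    have hL2 : p ^ L / p ^ L % p = 1 := by
      rw [Nat.div_self (hpos L), Nat.mod_eq_of_lt hp.one_lt]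
    rw [hL1, hL2, Nat.choose_one_right]
    have hones : ∏ i ∈ range L, (t * p ^ L / p ^ i % p).choose (p ^ L / p ^ i % p) = 1 := by
      apply prod_eq_one
      intro i hi
      have hiL : i < L := mem_range.mp hi
      have e1 : t * p ^ L = (t * p ^ (L - i - 1) * p) * p ^ i := by
        rw [mul_assoc, mul_assoc, ← pow_succ']
        rw [← pow_add]
        congr 2
        omega
      have e2 : p ^ L = (p ^ (L - i - 1) * p) * p ^ i := by
        rw [← pow_succ, ← pow_add]
        congr 1
        omega
      have d1 : t * p ^ L / p ^ i % p = 0 := by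
        rw [e1, Nat.mul_div_cancel _ (hpos i), Nat.mul_mod_left]
      have d2 : p ^ L / p ^ i % p = 0 := by
        rw [e2, Nat.mul_div_cancel _ (hpos i), Nat.mul_mod_left]
      rw [d1, d2]
      rfl
    rw [hones, one_mul]
  rw [hprod] at h
  exact (ZMod.natCast_eq_natCast_iff _ _ _).mpr h

private lemma lucas_add (p : ℕ) (hp : p.Prime) (L m a : ℕ) (hm : m < p ^ L) (ha : a < p) :
    (((m + a * p ^ L).choose m : ℕ) : ZMod p) = 1 := by
  haveI := Fact.mk hp
  have hpos : ∀ i : ℕ, 0 < p ^ i := fun i => pow_pos hp.pos i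
  have hn : m + a * p ^ L < p ^ (L + 1) := by
    have := pow_digit_bound p hp.one_lt L a ha
    omega
  have hk : m < p ^ (L + 1) :=
    hm.trans (Nat.pow_lt_pow_right hp.one_lt (Nat.lt_succ_self L))
  have h := Choose.choose_modEq_prod_range_choose_nat (p := p) hn hk
  have hprod : ∏ i ∈ range (L + 1),
      ((m + a * p ^ L) / p ^ i % p).choose (m / p ^ i % p) = 1 := by
    apply prod_eq_one
    intro i hi
    have hiL : i < L + 1 := mem_range.mp hi
    rcases Nat.lt_or_ge i L with hlt | hge
    · have e1 : m + a * p ^ L = m + (a * p ^ (L - i - 1) * p) * p ^ i := by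
        rw [mul_assoc, mul_assoc, ← pow_succ', ← pow_add]
        congr 3
        omega
      have d1 : (m + a * p ^ L) / p ^ i % p = m / p ^ i % p := by
        rw [e1, Nat.add_mul_div_right _ _ (hpos i), Nat.add_mul_mod_self_right]
      rw [d1, Nat.choose_self]
    · have hiL' : i = L := by omega
      rw [hiL']
      have d1 : (m + a * p ^ L) / p ^ L = a := by
        rw [Nat.add_mul_div_right _ _ (hpos L), Nat.div_eq_of_lt hm, Nat.zero_add]
      have d2 : m / p ^ L % p = 0 := by
        rw [Nat.div_eq_of_lt hm, Nat.zero_mod]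
      rw [d1, d2, Nat.mod_eq_of_lt ha, Nat.choose_zero_right]
  rw [hprod] at h
  have := (ZMod.natCast_eq_natCast_iff _ _ _).mpr h
  simpa using this

private lemma factorial_mul_pow (p : ℕ) (hp : p.Prime) (L : ℕ) :
    ∀ a, a < p → ∃ q : ℕ, (a * p ^ L)! = q * ((p ^ L)!) ^ a ∧
      (q : ZMod p) = ((a ! : ℕ) : ZMod p) := by
  intro a
  induction a with
  | zero => exact fun _ => ⟨1, by simp⟩
  | succ a ih =>
    intro ha
    obtain ⟨q, hq, hq2⟩ := ih (Nat.lt_of_succ_lt ha)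
    refine ⟨((a + 1) * p ^ L).choose (p ^ L) * q, ?_, ?_⟩
    · have hle : p ^ L ≤ (a + 1) * p ^ L := Nat.le_mul_of_pos_left _ (Nat.succ_pos a)
      have key := Nat.choose_mul_factorial_mul_factorial hle
      have hsub : (a + 1) * p ^ L - p ^ L = a * p ^ L := by
        rw [add_mul, one_mul, Nat.add_sub_cancel]
      rw [hsub, hq] at key
      rw [← key]
      ring
    · push_cast
      rw [lucas_pow p hp L (a + 1) ha, hq2, Nat.factorial_succ]
      push_cast
      ring

private lemma statement14_aux (p : ℕ) (hp : p.Prime) (d : ℕ → ℕ) :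
    ∀ ℓ, (∀ i, i ≤ ℓ → d i < p) →
      ∃ q : ℕ, (∑ i ∈ range (ℓ + 1), d i * p ^ i)! =
          q * ∏ i ∈ range (ℓ + 1), ((p ^ i)!) ^ (d i) ∧
        (q : ZMod p) = ∏ i ∈ range (ℓ + 1), (((d i)! : ℕ) : ZMod p) := by
  intro ℓ
  induction ℓ with
  | zero =>
    intro _
    refine ⟨(d 0)!, ?_, ?_⟩ <;> simp
  | succ ℓ ih =>
    intro hd
    obtain ⟨q₁, hq₁, hc₁⟩ := ih fun i hi => hd i (hi.trans (Nat.le_succ ℓ))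
    have hm : (∑ i ∈ range (ℓ + 1), d i * p ^ i) < p ^ (ℓ + 1) :=
      sum_digits_lt p hp.pos d (ℓ + 1) fun i hi => hd i (by omega)
    obtain ⟨q₂, hq₂, hc₂⟩ := factorial_mul_pow p hp (ℓ + 1) (d (ℓ + 1)) (hd _ le_rfl)
    set m := ∑ i ∈ range (ℓ + 1), d i * p ^ i with hm_def
    have hn : ∑ i ∈ range (ℓ + 1 + 1), d i * p ^ i = m + d (ℓ + 1) * p ^ (ℓ + 1) :=
      sum_range_succ _ _
    refine ⟨(m + d (ℓ + 1) * p ^ (ℓ + 1)).choose m * q₁ * q₂, ?_, ?_⟩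
    · rw [hn]
      have hle : m ≤ m + d (ℓ + 1) * p ^ (ℓ + 1) := Nat.le_add_right _ _
      have key := Nat.choose_mul_factorial_mul_factorial hle
      have hsub : m + d (ℓ + 1) * p ^ (ℓ + 1) - m = d (ℓ + 1) * p ^ (ℓ + 1) := by omega
      rw [hsub, hq₁, hq₂] at key
      rw [prod_range_succ, ← key]
      ring
    · push_cast
      rw [prod_range_succ]
      rw [lucas_add p hp (ℓ + 1) m (d (ℓ + 1)) hm (hd _ le_rfl), hc₁, hc₂]
      ring

/-- Let `p` be a prime and let `j` have base-`p` expansion `j = Σ_{i=0}^{ℓ} d i * p^i`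
with `d i < p`.  Then `Π_i ((p^i)!)^(d i)` divides `j!`, and the quotient is congruent
to `Π_i (d i)!` modulo `p`. -/
theorem statement14 (p : ℕ) (hp : Nat.Prime p) (ℓ : ℕ) (d : ℕ → ℕ)
    (hd : ∀ i, i ≤ ℓ → d i < p) (j : ℕ)
    (hj : j = ∑ i ∈ Finset.range (ℓ + 1), d i * p ^ i) :
    (∏ i ∈ Finset.range (ℓ + 1), (Nat.factorial (p ^ i)) ^ (d i)) ∣ Nat.factorial j ∧
      ((Nat.factorial j / ∏ i ∈ Finset.range (ℓ + 1), (Nat.factorial (p ^ i)) ^ (d i) : ℕ) :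
          ZMod p) =
        ∏ i ∈ Finset.range (ℓ + 1), ((Nat.factorial (d i) : ZMod p)) := by
  obtain ⟨q, hq, hc⟩ := statement14_aux p hp d ℓ hd
  subst hj
  have hPpos : 0 < ∏ i ∈ range (ℓ + 1), ((p ^ i)!) ^ (d i) :=
    prod_pos fun i _ => pow_pos (Nat.factorial_pos _) _
  constructor
  · exact ⟨q, by rw [hq, mul_comm]⟩
  · rw [hq, Nat.mul_div_cancel _ hPpos]
    exact hc
end
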